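/- Let m_el, m_n > 0, M := m_el + m_n, Λ > 0, and let 0 < p_c < M. Then for every P ∈ ℝ³ with |P| ≤ p_c and every σ with 0 ≤ σ ≤ Λ/2, one has min(γ¹_{≥σ}(P), γ²_{≥σ}(P), γ³_{≥σ}(P)) − γ⁰_{≥σ}(P) ≥ (1/(8 m_el m_n π²)) ∫_{ℝ³} 1_{Λ/2 ≤ |k| ≤ Λ}(k) · |k| / ((1 + p_c/M)|k| + |k|²/(2M)) dk, and this lower bound is a strictly positive real number. -/

import Mathlib

/-!
Since every `γʲ` has a nonnegative integrand, the gap is at least `−γ⁰`. By Cauchy–Schwarz,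
`|k·P| ≤ p_c |k|`, so the denominator `D(k) = |k| − k·P/M + |k|²/(2M)` of `γ⁰` lies between
`(1 − p_c/M)|k|` and `(1 + p_c/M)|k| + |k|²/(2M)`. The lower bound makes the integrand of `−γ⁰`
bounded, hence integrable over the ball of radius `Λ`; the upper bound, together with
`[Λ/2, Λ] ⊆ [σ, Λ]`, bounds that integrand below by the stated one. The latter is positive on
the open shell `Λ/2 < |k| < Λ`, which has positive Lebesgue measure.
-/

noncomputable section

open MeasureTheory

/-- ℝ³ with the Euclidean norm. -/
abbrev R3 := EuclideanSpace ℝ (Fin 3)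

/-- `γ⁰_{≥σ}(P) = −(1/(8 m_el m_n π²)) ∫ |k| 1_{σ≤|k|≤Λ}(k) / (|k| − (k·P)/M + |k|²/(2M)) dk`,
with `M = m_el + m_n`. -/
def gamma0 (mel mn Λ σ : ℝ) (P : R3) : ℝ :=
  -(1 / (8 * mel * mn * Real.pi ^ 2)) *
    ∫ k : R3,
      ‖k‖ * (if σ ≤ ‖k‖ ∧ ‖k‖ ≤ Λ then (1 : ℝ) else 0) /
        (‖k‖ - (inner ℝ k P : ℝ) / (mel + mn) + ‖k‖ ^ 2 / (2 * (mel + mn)))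

/-- `γ^j_{≥σ}(P) = (1/(8 m_el m_n π²)) ∫ |k| 1_{σ≤|k|≤Λ}(k) (k_j²/|k|²) / (|k| − (k·P)/M + |k|²/(2M)) dk`,
with `M = m_el + m_n`, for `j = 1,2,3`. -/
def gammaJ (mel mn Λ σ : ℝ) (P : R3) (j : Fin 3) : ℝ :=
  (1 / (8 * mel * mn * Real.pi ^ 2)) *
    ∫ k : R3,
      ‖k‖ * (if σ ≤ ‖k‖ ∧ ‖k‖ ≤ Λ then (1 : ℝ) else 0) * ((k j) ^ 2 / ‖k‖ ^ 2) /
        (‖k‖ - (inner ℝ k P : ℝ) / (mel + mn) + ‖k‖ ^ 2 / (2 * (mel + mn)))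

lemma integrable_of_norm_le_of_eq_zero_of_lt {X : Type*} [NormedAddCommGroup X] [ProperSpace X]
    [MeasurableSpace X] {μ : Measure X} [IsFiniteMeasureOnCompacts μ] {f : X → ℝ} {C R : ℝ}
    (hf : AEStronglyMeasurable f μ) (hC : ∀ x, ‖f x‖ ≤ C) (hR : ∀ x, R < ‖x‖ → f x = 0) :
    Integrable f μ :=
  (Measure.integrableOn_of_bounded (isCompact_closedBall 0 R).measure_lt_top.ne hf
    (ae_of_all _ hC)).integrable_of_forall_notMem_eq_zero
    fun x hx => hR x (by simpa using hx)

lemma integral_pos_of_pos_on_isOpen {X : Type*} [TopologicalSpace X] [MeasurableSpace X]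
    {μ : Measure X} [μ.IsOpenPosMeasure] {f : X → ℝ} (hf0 : 0 ≤ f) (hf : Integrable f μ)
    {U : Set X} (hU : IsOpen U) (hne : U.Nonempty) (hpos : ∀ x ∈ U, 0 < f x) :
    0 < ∫ x, f x ∂μ :=
  (integral_pos_iff_support_of_nonneg hf0 hf).2 <|
    (hU.measure_pos μ hne).trans_le (measure_mono fun x hx => (hpos x hx).ne')

lemma measurable_shell {X : Type*} [NormedAddCommGroup X] [MeasurableSpace X]
    [OpensMeasurableSpace X] (a b : ℝ) :
    Measurable fun k : X => if a ≤ ‖k‖ ∧ ‖k‖ ≤ b then (1 : ℝ) else 0 :=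
  Measurable.ite ((measurableSet_le measurable_const measurable_norm).inter
    (measurableSet_le measurable_norm measurable_const)) measurable_const measurable_const

section Recoil

variable {E : Type*} [NormedAddCommGroup E] {M p a Λ : ℝ}

def recoilMinorant (a Λ M p : ℝ) (k : E) : ℝ :=
  (if a ≤ ‖k‖ ∧ ‖k‖ ≤ Λ then 1 else 0) * ‖k‖ / ((1 + p / M) * ‖k‖ + ‖k‖ ^ 2 / (2 * M))

lemma recoilMinorant_nonneg (hM : 0 < M) (hp : 0 ≤ p) (k : E) : 0 ≤ recoilMinorant a Λ M p k := by
  unfold recoilMinorant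
  positivity

variable [InnerProductSpace ℝ E] {P : E}

def recoilDenom (M : ℝ) (P k : E) : ℝ := ‖k‖ - inner ℝ k P / M + ‖k‖ ^ 2 / (2 * M)

lemma mul_one_sub_div_le_recoilDenom (hM : 0 < M) (hP : ‖P‖ ≤ p) (k : E) :
    ‖k‖ * (1 - p / M) ≤ recoilDenom M P k := by
  have hinner : inner ℝ k P ≤ ‖k‖ * p :=
    (real_inner_le_norm k P).trans (mul_le_mul_of_nonneg_left hP (norm_nonneg k))
  have : inner ℝ k P / M ≤ ‖k‖ * (p / M) := by
    rw [← mul_div_assoc]; exact div_le_div_of_nonneg_right hinner hM.le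
  have : 0 ≤ ‖k‖ ^ 2 / (2 * M) := by positivity
  unfold recoilDenom
  linarith

lemma recoilDenom_le (hM : 0 < M) (hP : ‖P‖ ≤ p) (k : E) :
    recoilDenom M P k ≤ (1 + p / M) * ‖k‖ + ‖k‖ ^ 2 / (2 * M) := by
  have hinner : -(‖k‖ * p) ≤ inner ℝ k P :=
    neg_le_of_abs_le <| (abs_real_inner_le_norm k P).trans
      (mul_le_mul_of_nonneg_left hP (norm_nonneg k))
  have : -(‖k‖ * p) / M ≤ inner ℝ k P / M := div_le_div_of_nonneg_right hinner hM.le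
  unfold recoilDenom
  rw [neg_div, mul_div_assoc] at this
  linarith

lemma recoilDenom_nonneg (hM : 0 < M) (hPM : ‖P‖ ≤ M) (k : E) : 0 ≤ recoilDenom M P k :=
  (mul_nonneg (norm_nonneg k) (sub_nonneg.2 ((div_le_one hM).2 hPM))).trans
    (mul_one_sub_div_le_recoilDenom hM le_rfl k)

lemma recoilDenom_pos (hM : 0 < M) (hPM : ‖P‖ < M) {k : E} (hk : k ≠ 0) :
    0 < recoilDenom M P k :=
  (mul_pos (norm_pos_iff.2 hk) (sub_pos.2 ((div_lt_one hM).2 hPM))).trans_le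
    (mul_one_sub_div_le_recoilDenom hM le_rfl k)

lemma continuous_recoilDenom (M : ℝ) (P : E) : Continuous (recoilDenom M P) := by
  unfold recoilDenom; fun_prop

def recoilIntegrand (σ Λ M : ℝ) (P k : E) : ℝ :=
  ‖k‖ * (if σ ≤ ‖k‖ ∧ ‖k‖ ≤ Λ then 1 else 0) / recoilDenom M P k

variable {σ : ℝ}

lemma recoilIntegrand_nonneg (hM : 0 < M) (hPM : ‖P‖ ≤ M) (k : E) :
    0 ≤ recoilIntegrand σ Λ M P k := by
  unfold recoilIntegrand
  exact div_nonneg (by positivity) (recoilDenom_nonneg hM hPM k)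

lemma recoilIntegrand_le (hM : 0 < M) (hPM : ‖P‖ < M) (k : E) :
    recoilIntegrand σ Λ M P k ≤ (1 - ‖P‖ / M)⁻¹ := by
  have hgap : 0 < 1 - ‖P‖ / M := sub_pos.2 ((div_lt_one hM).2 hPM)
  have hnum : ‖k‖ * (if σ ≤ ‖k‖ ∧ ‖k‖ ≤ Λ then (1 : ℝ) else 0) ≤ ‖k‖ := by
    split_ifs <;> simp
  refine div_le_of_le_mul₀ (recoilDenom_nonneg hM hPM.le k) (inv_nonneg.2 hgap.le) ?_
  calc _ ≤ ‖k‖ := hnum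
    _ = (1 - ‖P‖ / M)⁻¹ * (‖k‖ * (1 - ‖P‖ / M)) := by
      rw [mul_left_comm, inv_mul_cancel₀ hgap.ne', mul_one]
    _ ≤ (1 - ‖P‖ / M)⁻¹ * recoilDenom M P k :=
      mul_le_mul_of_nonneg_left (mul_one_sub_div_le_recoilDenom hM le_rfl k) (inv_nonneg.2 hgap.le)

lemma recoilIntegrand_eq_zero_of_lt {k : E} (hk : Λ < ‖k‖) : recoilIntegrand σ Λ M P k = 0 := by
  simp [recoilIntegrand, hk.not_ge]

lemma recoilMinorant_le_recoilIntegrand (hM : 0 < M) (hP : ‖P‖ ≤ p) (hPM : ‖P‖ < M) (hσa : σ ≤ a)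
    (k : E) : recoilMinorant a Λ M p k ≤ recoilIntegrand σ Λ M P k := by
  unfold recoilMinorant recoilIntegrand
  by_cases hk : k = 0
  · simp [hk]
  by_cases hshell : a ≤ ‖k‖ ∧ ‖k‖ ≤ Λ
  · rw [if_pos hshell, if_pos ⟨hσa.trans hshell.1, hshell.2⟩, one_mul, mul_one]
    exact div_le_div_of_nonneg_left (norm_nonneg k) (recoilDenom_pos hM hPM hk)
      (recoilDenom_le hM hP k)
  · rw [if_neg hshell, zero_mul, zero_div]
    exact recoilIntegrand_nonneg hM hPM.le k

variable [MeasurableSpace E] [BorelSpace E] [FiniteDimensional ℝ E] {μ : Measure E}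

lemma integrable_recoilIntegrand [IsFiniteMeasureOnCompacts μ] (hM : 0 < M) (hPM : ‖P‖ < M) :
    Integrable (recoilIntegrand σ Λ M P) μ := by
  refine integrable_of_norm_le_of_eq_zero_of_lt (C := (1 - ‖P‖ / M)⁻¹) ?_ (fun k => ?_)
    (fun k hk => recoilIntegrand_eq_zero_of_lt hk)
  · exact (((measurable_norm.mul (measurable_shell σ Λ)).div
      (continuous_recoilDenom M P).measurable)).aestronglyMeasurable
  · rw [Real.norm_of_nonneg (recoilIntegrand_nonneg hM hPM.le k)]
    exact recoilIntegrand_le hM hPM k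

lemma integrable_recoilMinorant [IsFiniteMeasureOnCompacts μ] (hM : 0 < M) (hp : 0 ≤ p) :
    Integrable (recoilMinorant a Λ M p) μ := by
  have hP0 : ‖(0 : E)‖ < M := by simpa using hM
  refine (integrable_recoilIntegrand (σ := a) (Λ := Λ) hM hP0).mono' ?_ (ae_of_all _ fun k => ?_)
  · exact ((measurable_shell a Λ).mul measurable_norm).div
      (by fun_prop : Measurable fun k : E => (1 + p / M) * ‖k‖ + ‖k‖ ^ 2 / (2 * M))
      |>.aestronglyMeasurable
  · rw [Real.norm_of_nonneg (recoilMinorant_nonneg hM hp k)]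
    exact recoilMinorant_le_recoilIntegrand hM (by simpa using hp) hP0 le_rfl k

lemma integral_recoilMinorant_le_integral_recoilIntegrand [IsFiniteMeasureOnCompacts μ]
    (hM : 0 < M) (hP : ‖P‖ ≤ p) (hPM : ‖P‖ < M) (hσa : σ ≤ a) :
    ∫ k, recoilMinorant a Λ M p k ∂μ ≤ ∫ k, recoilIntegrand σ Λ M P k ∂μ :=
  integral_mono (integrable_recoilMinorant hM ((norm_nonneg P).trans hP))
    (integrable_recoilIntegrand hM hPM) (recoilMinorant_le_recoilIntegrand hM hP hPM hσa)

lemma integral_recoilMinorant_pos [Nontrivial E] [μ.IsAddHaarMeasure] (hM : 0 < M) (hp : 0 ≤ p)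
    (ha : 0 ≤ a) (haΛ : a < Λ) : 0 < ∫ k, recoilMinorant a Λ M p k ∂μ := by
  refine integral_pos_of_pos_on_isOpen (recoilMinorant_nonneg hM hp)
    (integrable_recoilMinorant hM hp) (U := {k | a < ‖k‖ ∧ ‖k‖ < Λ})
    ((isOpen_lt continuous_const continuous_norm).inter
      (isOpen_lt continuous_norm continuous_const)) ?_ fun k hk => ?_
  · obtain ⟨k, hk⟩ := exists_norm_eq E (c := (a + Λ) / 2) (by linarith)
    exact ⟨k, by rw [Set.mem_ofPred, hk]; constructor <;> linarith⟩
  · have hk0 : 0 < ‖k‖ := ha.trans_lt hk.1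
    rw [recoilMinorant, if_pos ⟨hk.1.le, hk.2.le⟩, one_mul]
    positivity

end Recoil

lemma gammaJ_nonneg {mel mn Λ σ : ℝ} (hmel : 0 < mel) (hmn : 0 < mn) {P : R3}
    (hPM : ‖P‖ ≤ mel + mn) (j : Fin 3) : 0 ≤ gammaJ mel mn Λ σ P j := by
  refine mul_nonneg (by positivity) (integral_nonneg fun k => ?_)
  exact div_nonneg (by positivity) (recoilDenom_nonneg (add_pos hmel hmn) hPM k)

theorem gamma_gap_positive_general (mel mn Λ pc : ℝ) (hmel : 0 < mel) (hmn : 0 < mn)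
    (hΛ : 0 < Λ) (hpc : pc < mel + mn) :
    ∀ P : R3, ‖P‖ ≤ pc → ∀ σ : ℝ, 0 ≤ σ → σ ≤ Λ / 2 →
      min (gammaJ mel mn Λ σ P 0) (min (gammaJ mel mn Λ σ P 1) (gammaJ mel mn Λ σ P 2)) -
          gamma0 mel mn Λ σ P
        ≥ (1 / (8 * mel * mn * Real.pi ^ 2)) *
            ∫ k : R3,
              (if Λ / 2 ≤ ‖k‖ ∧ ‖k‖ ≤ Λ then (1 : ℝ) else 0) * ‖k‖ /
                ((1 + pc / (mel + mn)) * ‖k‖ + ‖k‖ ^ 2 / (2 * (mel + mn))) ∧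
      0 < (1 / (8 * mel * mn * Real.pi ^ 2)) *
            ∫ k : R3,
              (if Λ / 2 ≤ ‖k‖ ∧ ‖k‖ ≤ Λ then (1 : ℝ) else 0) * ‖k‖ /
                ((1 + pc / (mel + mn)) * ‖k‖ + ‖k‖ ^ 2 / (2 * (mel + mn))) := by
  intro P hP σ _ hσ
  have hM : 0 < mel + mn := add_pos hmel hmn
  have hPM : ‖P‖ < mel + mn := hP.trans_lt hpc
  have hγ : ∀ j, 0 ≤ gammaJ mel mn Λ σ P j := gammaJ_nonneg hmel hmn hPM.le
  set c := 1 / (8 * mel * mn * Real.pi ^ 2)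
  have hc : 0 < c := by positivity
  have hγ0 : gamma0 mel mn Λ σ P = -(c * ∫ k : R3, recoilIntegrand σ Λ (mel + mn) P k) :=
    neg_mul _ _
  refine ⟨?_, mul_pos hc (integral_recoilMinorant_pos hM ((norm_nonneg P).trans hP)
    (by positivity) (by linarith))⟩
  calc _ ≥ c * ∫ k : R3, recoilIntegrand σ Λ (mel + mn) P k := by
        rw [hγ0]; linarith [le_min (hγ 0) (le_min (hγ 1) (hγ 2))]
    _ ≥ c * ∫ k : R3, recoilMinorant (Λ / 2) Λ (mel + mn) pc k :=
        mul_le_mul_of_nonneg_left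
          (integral_recoilMinorant_le_integral_recoilIntegrand hM hP hPM hσ) hc.le

/-- The hyperfine gap `min(γ¹,γ²,γ³) − γ⁰` is bounded below by a strictly positive
constant, uniformly in `|P| ≤ p_c` and `0 ≤ σ ≤ Λ/2`. -/
theorem gamma_gap_positive (mel mn Λ pc : ℝ) (hmel : 0 < mel) (hmn : 0 < mn)
    (hΛ : 0 < Λ) (hpc0 : 0 < pc) (hpc : pc < mel + mn) :
    ∀ P : R3, ‖P‖ ≤ pc → ∀ σ : ℝ, 0 ≤ σ → σ ≤ Λ / 2 →
      min (gammaJ mel mn Λ σ P 0) (min (gammaJ mel mn Λ σ P 1) (gammaJ mel mn Λ σ P 2)) -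
          gamma0 mel mn Λ σ P
        ≥ (1 / (8 * mel * mn * Real.pi ^ 2)) *
            ∫ k : R3,
              (if Λ / 2 ≤ ‖k‖ ∧ ‖k‖ ≤ Λ then (1 : ℝ) else 0) * ‖k‖ /
                ((1 + pc / (mel + mn)) * ‖k‖ + ‖k‖ ^ 2 / (2 * (mel + mn))) ∧
      0 < (1 / (8 * mel * mn * Real.pi ^ 2)) *
            ∫ k : R3,
              (if Λ / 2 ≤ ‖k‖ ∧ ‖k‖ ≤ Λ then (1 : ℝ) else 0) * ‖k‖ /
                ((1 + pc / (mel + mn)) * ‖k‖ + ‖k‖ ^ 2 / (2 * (mel + mn))) :=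
  gamma_gap_positive_general mel mn Λ pc hmel hmn hΛ hpc
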